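/- Let R_M be the linear 'mixing' map on ℝ^{4n} given in block form (with coordinates (q, q̃, p, p̃)) by q' = αq + (1−α)q̃, q̃' = (1−α)q + αq̃, p' = βp + (1−β)p̃, p̃' = (1−β)p + βp̃. Then R_M is symplectic with respect to the extended symplectic form (pairing (q,p) and (q̃,p̃)) if and only if (2α−1)(2β−1) = 1, i.e. β = α/(2α−1) with α ≠ 1/2; in particular, among choices α, β ∈ {0, 1}, exactly the combinations α = β (identity and full swap of both coordinates and momenta) are symplectic. -/
import Mathlib


/-- A point of the extended phase space ℝ^{4n}, as `(q, q̃, p, p̃)`. -/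
abbrev Ext4 (n : ℕ) := (Fin n → ℝ) × (Fin n → ℝ) × (Fin n → ℝ) × (Fin n → ℝ)

/-- The canonical symplectic form on the extended phase space,
pairing `q` with `p` and `q̃` with `p̃`. -/
def omegaE {n : ℕ} (u v : Ext4 n) : ℝ :=
  ∑ i : Fin n,
    (u.1 i * v.2.2.1 i - u.2.2.1 i * v.1 i
     + u.2.1 i * v.2.2.2 i - u.2.2.2 i * v.2.1 i)

/-- The linear mixing map `R_M = (M_α ⊕ M_β) ⊗ I_n`:
`q' = αq + (1-α)q̃`, `q̃' = (1-α)q + αq̃`, `p' = βp + (1-β)p̃`,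
`p̃' = (1-β)p + βp̃`. -/
def Rmix {n : ℕ} (α β : ℝ) (z : Ext4 n) : Ext4 n :=
  (α • z.1 + (1 - α) • z.2.1,
   (1 - α) • z.1 + α • z.2.1,
   β • z.2.2.1 + (1 - β) • z.2.2.2,
   (1 - β) • z.2.2.1 + β • z.2.2.2)

/-- The "cross" form pairing `q` with `p̃` and `q̃` with `p`. -/
def crossE {n : ℕ} (u v : Ext4 n) : ℝ :=
  ∑ i : Fin n,
    (u.1 i * v.2.2.2 i - u.2.2.1 i * v.2.1 i
     + u.2.1 i * v.2.2.1 i - u.2.2.2 i * v.1 i)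

lemma key {n : ℕ} (a b : ℝ) (u v : Ext4 n) :
    omegaE (Rmix a b u) (Rmix a b v) =
      (a * b + (1 - a) * (1 - b)) * omegaE u v
        + (a * (1 - b) + (1 - a) * b) * crossE u v := by
  simp only [omegaE, Rmix, crossE, Finset.mul_sum, ← Finset.sum_add_distrib]
  refine Finset.sum_congr rfl fun i _ => ?_
  simp only [Pi.add_apply, Pi.smul_apply, smul_eq_mul]
  ring

lemma main {n : ℕ} (hn : 0 < n) (a b : ℝ) :
    (∀ u v : Ext4 n, omegaE (Rmix a b u) (Rmix a b v) = omegaE u v) ↔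
      (2 * a - 1) * (2 * b - 1) = 1 := by
  constructor
  · intro h
    set u : Ext4 n := (fun _ => 1, fun _ => 0, fun _ => 0, fun _ => 0) with hu
    set v : Ext4 n := (fun _ => 0, fun _ => 0, fun _ => 0, fun _ => 1) with hv
    have h1 := h u v
    rw [key] at h1
    have ho : omegaE u v = 0 := by simp [omegaE, hu, hv]
    have hc : crossE u v = (n : ℝ) := by simp [crossE, hu, hv]
    rw [ho, hc, mul_zero, zero_add] at h1
    have hB : a * (1 - b) + (1 - a) * b = 0 := by
      rcases mul_eq_zero.1 h1 with h2 | h2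
      · exact h2
      · exact absurd h2 (by positivity)
    linear_combination (-2 : ℝ) * hB
  · intro h u v
    rw [key]
    have hA : a * b + (1 - a) * (1 - b) = 1 := by linear_combination (1/2 : ℝ) * h
    have hB : a * (1 - b) + (1 - a) * b = 0 := by linear_combination (-1/2 : ℝ) * h
    rw [hA, hB, one_mul, zero_mul, add_zero]

/-- The mixing map `R_M` is symplectic for the extended symplectic form if and
only if `(2α-1)(2β-1) = 1`; in particular, among `α, β ∈ {0, 1}`, exactly the
combinations with `α = β` (identity, and full swap of both coordinates and
momenta) are symplectic. -/
theorem stmt_13 {n : ℕ} (hn : 0 < n) (α β : ℝ) :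
    ((∀ u v : Ext4 n, omegaE (Rmix α β u) (Rmix α β v) = omegaE u v) ↔
      (2 * α - 1) * (2 * β - 1) = 1) ∧
    (∀ a b : ℝ, (a = 0 ∨ a = 1) → (b = 0 ∨ b = 1) →
      ((∀ u v : Ext4 n, omegaE (Rmix a b u) (Rmix a b v) = omegaE u v) ↔ a = b)) := by
  refine ⟨main hn α β, fun a b ha hb => ?_⟩
  rw [main hn a b]
  rcases ha with rfl | rfl <;> rcases hb with rfl | rfl <;> norm_num
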